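/- For any positive definite Hermitian f and full-rank density matrix σ, Ent_2(I_{2,1}(f)) = (1/2) Ent_1(f), relating the L_2 and L_1 relative entropies via the power operator. -/

import Mathlib

open Matrix
open scoped ComplexOrder

noncomputable section

/-- Square complex matrices. -/
abbrev Mat (d : ℕ) := Matrix (Fin d) (Fin d) ℂ

variable {d : ℕ}

/-- `A ^ r` for a selfadjoint matrix `A`, via the continuous functional calculus. -/
def matPow (A : Mat d) (r : ℝ) : Mat d :=
  cfc (fun x : ℝ => x ^ r) A

/-- `|A| = (A† A)^{1/2}`. -/
def matAbs (A : Mat d) : Mat d :=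
  cfc Real.sqrt (Aᴴ * A)

/-- Matrix logarithm via the continuous functional calculus. -/
def matLog (A : Mat d) : Mat d :=
  cfc Real.log A

/-- The `σ`-weighted `L_p` norm `‖f‖_{p,σ} = (Tr |σ^{1/(2p)} f σ^{1/(2p)}|^p)^{1/p}`. -/
def pnorm (σ f : Mat d) (p : ℝ) : ℝ :=
  ((matPow (matAbs (matPow σ (1/(2*p)) * f * matPow σ (1/(2*p)))) p).trace.re) ^ (1/p)

/-- The `L_p` power operator `I_{p,q}(f) = σ^{-1/(2p)} |σ^{1/(2q)} f σ^{1/(2q)}|^{q/p} σ^{-1/(2p)}`. -/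
def Ipow (σ : Mat d) (p q : ℝ) (f : Mat d) : Mat d :=
  matPow σ (-(1/(2*p))) *
    matPow (matAbs (matPow σ (1/(2*q)) * f * matPow σ (1/(2*q)))) (q/p) *
      matPow σ (-(1/(2*p)))

/-- The `L_1` relative entropy. -/
def Ent1 (σ f : Mat d) : ℝ :=
  ((matPow σ (1/2) * f * matPow σ (1/2)) *
      (matLog (matPow σ (1/2) * f * matPow σ (1/2)) - matLog σ)).trace.re
  - ((matPow σ (1/2) * f * matPow σ (1/2)).trace.re) *
      Real.log ((matPow σ (1/2) * f * matPow σ (1/2)).trace.re)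

/-- The `L_2` relative entropy. -/
def Ent2 (σ f : Mat d) : ℝ :=
  (((matPow σ (1/4) * f * matPow σ (1/4)) ^ 2 *
      matLog (matPow σ (1/4) * f * matPow σ (1/4))).trace.re)
  - (1/2) * (((matPow σ (1/4) * f * matPow σ (1/4)) ^ 2 * matLog σ).trace.re)
  - (1/2) * (((matPow σ (1/4) * f * matPow σ (1/4)) ^ 2).trace.re) *
      Real.log (((matPow σ (1/4) * f * matPow σ (1/4)) ^ 2).trace.re)

/-!
Put `A = σ^{1/2} f σ^{1/2}`, which is positive definite. The outer factors `σ^{-1/4}` of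
`I_{2,1}(f) = σ^{-1/4} A^{1/2} σ^{-1/4}` cancel against the weights `σ^{1/4}` in `Ent_2`, so every
term of `Ent_2(I_{2,1}(f))` is the corresponding term of `Ent_1(f)` evaluated through
`(A^{1/2})^2 = A` and `log A^{1/2} = (1/2) log A`, i.e. half of it.
-/

open scoped MatrixOrder in
lemma Matrix.PosDef.spectrum_real_pos {A : Mat d} (hA : A.PosDef) :
    ∀ x ∈ spectrum ℝ A, 0 < x :=
  fun _ hx => hA.isStrictlyPositive.spectrum_pos hx

lemma continuousOn_rpow_const_of_pos {s : Set ℝ} (hs : ∀ x ∈ s, 0 < x) (r : ℝ) :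
    ContinuousOn (fun x : ℝ => x ^ r) s :=
  continuousOn_id.rpow_const fun x hx => Or.inl (hs x hx).ne'

lemma isSelfAdjoint_matPow (A : Mat d) (r : ℝ) : IsSelfAdjoint (matPow A r) :=
  cfc_predicate _ A

lemma matPow_zero {A : Mat d} (hA : IsSelfAdjoint A) : matPow A 0 = 1 := by
  simp only [matPow, Real.rpow_zero]
  exact cfc_const_one ℝ A

lemma matPow_one {A : Mat d} (hA : IsSelfAdjoint A) : matPow A 1 = A := by
  simp only [matPow, Real.rpow_one]
  exact cfc_id' ℝ A

lemma matPow_add {A : Mat d} (hA : A.PosDef) (r s : ℝ) :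
    matPow A (r + s) = matPow A r * matPow A s := by
  have hpos := hA.spectrum_real_pos
  rw [matPow, matPow, matPow, ← cfc_mul _ _ A (continuousOn_rpow_const_of_pos hpos r)
    (continuousOn_rpow_const_of_pos hpos s)]
  exact cfc_congr fun x hx => Real.rpow_add (hpos x hx) r s

lemma matPow_mul_matPow_neg {A : Mat d} (hA : A.PosDef) (r : ℝ) :
    matPow A r * matPow A (-r) = 1 := by
  rw [← matPow_add hA, add_neg_cancel, matPow_zero hA.1.isSelfAdjoint]

lemma matPow_neg_mul_matPow {A : Mat d} (hA : A.PosDef) (r : ℝ) :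
    matPow A (-r) * matPow A r = 1 := by
  simpa using matPow_mul_matPow_neg hA (-r)

lemma isUnit_matPow {A : Mat d} (hA : A.PosDef) (r : ℝ) : IsUnit (matPow A r) :=
  ⟨⟨_, _, matPow_mul_matPow_neg hA r, matPow_neg_mul_matPow hA r⟩, rfl⟩

lemma matPow_half_mul_self {A : Mat d} (hA : A.PosDef) :
    matPow A (1/2) * matPow A (1/2) = A := by
  rw [← matPow_add hA, add_halves, matPow_one hA.1.isSelfAdjoint]

lemma Matrix.PosDef.matPow_conj {σ f : Mat d} (hf : f.PosDef) (hσ : σ.PosDef) (r : ℝ) :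
    (matPow σ r * f * matPow σ r).PosDef := by
  have h := (Matrix.IsUnit.posDef_star_left_conjugate_iff (isUnit_matPow hσ r)).mpr hf
  rwa [(isSelfAdjoint_matPow σ r).star_eq] at h

lemma matLog_matPow {A : Mat d} (hA : A.PosDef) (r : ℝ) :
    matLog (matPow A r) = r • matLog A := by
  have hpos := hA.spectrum_real_pos
  have hlog : ContinuousOn Real.log ((fun x : ℝ => x ^ r) '' spectrum ℝ A) :=
    Real.continuousOn_log.mono <| by
      rintro _ ⟨x, hx, rfl⟩
      exact (Real.rpow_pos_of_pos (hpos x hx) r).ne'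
  rw [matLog, matLog, matPow, ← cfc_comp' Real.log (fun x : ℝ => x ^ r) A hlog
    (continuousOn_rpow_const_of_pos hpos r) hA.1.isSelfAdjoint, ← cfc_smul r Real.log A
    (Real.continuousOn_log.mono fun x hx => (hpos x hx).ne')]
  exact cfc_congr fun x hx => Real.log_rpow (hpos x hx) r

open scoped MatrixOrder in
lemma matAbs_of_posSemidef {A : Mat d} (hA : A.PosSemidef) : matAbs A = A := by
  rw [matAbs, hA.1.eq, ← sq, ← cfc_comp_pow Real.sqrt 2 A]
  rw [cfc_congr fun x hx => Real.sqrt_sq (spectrum_nonneg_of_nonneg hA.nonneg hx)]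
  exact cfc_id' ℝ A

lemma matPow_conj_Ipow {σ : Mat d} (hσ : σ.PosDef) (p q : ℝ) (f : Mat d) :
    matPow σ (1/(2*p)) * Ipow σ p q f * matPow σ (1/(2*p)) =
      matPow (matAbs (matPow σ (1/(2*q)) * f * matPow σ (1/(2*q)))) (q/p) := by
  simp only [Ipow, Matrix.mul_assoc, matPow_neg_mul_matPow hσ, Matrix.mul_one]
  rw [← Matrix.mul_assoc, matPow_mul_matPow_neg hσ, Matrix.one_mul]

theorem ent2_Ipow_ent1_general (σ f : Mat d)
    (hσ : σ.PosDef) (hf : f.PosDef) :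
    Ent2 σ (Ipow σ 2 1 f) = (1/2) * Ent1 σ f := by
  have hconj := matPow_conj_Ipow hσ 2 1 f
  norm_num at hconj
  set A := matPow σ (1/2) * f * matPow σ (1/2)
  have hA : A.PosDef := hf.matPow_conj hσ (1/2)
  rw [matAbs_of_posSemidef hA.posSemidef] at hconj
  rw [Ent2, Ent1, hconj, sq, matPow_half_mul_self hA, matLog_matPow hA, Matrix.mul_smul,
    trace_smul, Matrix.mul_sub, trace_sub]
  simp only [Complex.real_smul, Complex.re_ofReal_mul, Complex.sub_re]
  ring

/-- `Ent_2(I_{2,1}(f)) = (1/2) Ent_1(f)`. -/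
theorem ent2_Ipow_ent1 (σ f : Mat d)
    (hσ : σ.PosDef) (hσ1 : σ.trace = 1) (hf : f.PosDef) :
    Ent2 σ (Ipow σ 2 1 f) = (1/2) * Ent1 σ f :=
  ent2_Ipow_ent1_general σ f hσ hf
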